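/- Let n, m, k be positive integers and let G' be a graph with k ≥ 2n + td(G') + td(P_m × P_n). Let G be a graph obtained from the disjoint union of G' and the broom B_{n,m,k} by adding some edges between V(G') and {(i,1) : 1 ≤ i ≤ n}. Suppose T is an optimal treedepth decomposition of G and d ≥ 1 is an integer such that: (1) there exists some 1 ≤ j ≤ m with top(T,d) ∩ {(i,j) : 1 ≤ i ≤ n} = ∅; and (2) for every 1 ≤ i ≤ n, the set V_i consisting of {(i,j) : 1 ≤ j ≤ m} together with the vertices of the path on 2^k − 1 vertices attached to (i,m) contains at least one vertex of top(T,d). Then d ≥ n. -/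

import Mathlib

/-!
Every connected vertex set `S` has a unique shallowest vertex in a treedepth decomposition `T`,
and it is an ancestor of all of `S`. Let `c` be the shallowest vertex of the grid column avoiding
`top(T,d)`; its depth exceeds `d`. For each row `i`, the shallowest vertex `zᵢ` of `Vᵢ` lies in
`top(T,d)` and is an ancestor of the vertex of `Vᵢ` in that column, as `c` is; hence `zᵢ` is an
ancestor of `c`. The `zᵢ` are distinct because the `Vᵢ` are disjoint, and they lie on the single
root path of `c` at depths in `[1, d]`, so there are at most `d` of them.
-/

open SimpleGraph

attribute [local instance] Classical.propDecidable

noncomputable section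

/-- A rooted forest on a vertex type `V`, given by a parent map together with a
depth function (the depth of a root is `1`, and the depth of a child is the depth
of its parent plus one).  The existence of such a depth function guarantees that
the parent map is acyclic, i.e. that the structure really is a rooted forest. -/
structure RootedForest (V : Type) where
  parent : V → Option V
  depth : V → ℕ
  depth_root : ∀ v, parent v = none → depth v = 1
  depth_parent : ∀ v u, parent v = some u → depth v = depth u + 1

namespace RootedForest

variable {V : Type}

/-- `T.Ancestor u v` means that `u` is a (reflexive) ancestor of `v` in `T`. -/
def Ancestor (T : RootedForest V) (u v : V) : Prop :=
  Relation.ReflTransGen (fun a b => T.parent a = some b) v u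

/-- The height of a rooted forest: the maximum number of vertices on a
root-to-leaf path of one of its trees (0 for the empty forest). -/
def height (T : RootedForest V) [Fintype V] : ℕ :=
  Finset.univ.sup T.depth

/-- The number of children of a vertex. -/
def childCount (T : RootedForest V) [Fintype V] (u : V) : ℕ :=
  (Finset.univ.filter (fun v => T.parent v = some u)).card

/-- The set of vertices of depth at most `d` in `T`. -/
def top (T : RootedForest V) (d : ℕ) : Set V := {v | T.depth v ≤ d}

/-- `T` is a rooted tree if it has exactly one root. -/
def IsTree (T : RootedForest V) : Prop := ∃! r, T.parent r = none

/-- The top separator of a rooted tree `T`: if no vertex of `T` has more than one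
child (i.e. `T` is a path), it is all of `V(T)`; otherwise it is the set of
vertices of depth at most the depth of the minimum-depth vertex having more than
one child. -/
def topSep (T : RootedForest V) [Fintype V] : Finset V :=
  if _ : ∃ p, 2 ≤ T.childCount p then
    Finset.univ.filter
      (fun v => T.depth v ≤ sInf {d | ∃ p, 2 ≤ T.childCount p ∧ T.depth p = d})
  else Finset.univ

end RootedForest

/-- `T` is a treedepth decomposition of `G`: a rooted forest on the vertex set of
`G` such that the endpoints of every edge of `G` are in ancestor-descendant
relation. -/
def IsTDDecomp {V : Type} (G : SimpleGraph V) (T : RootedForest V) : Prop :=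
  ∀ u v, G.Adj u v → T.Ancestor u v ∨ T.Ancestor v u

/-- The treedepth of a finite graph: the minimum height of a treedepth
decomposition of `G`. -/
def treedepth {V : Type} [Fintype V] (G : SimpleGraph V) : ℕ :=
  sInf {h | ∃ T : RootedForest V, IsTDDecomp G T ∧ T.height = h}

/-- `(T, f)` is a tree decomposition of `G`. -/
def IsTreeDecomp {V ι : Type} (G : SimpleGraph V) (T : SimpleGraph ι)
    (f : ι → Finset V) : Prop :=
  T.IsTree ∧
  (∀ v, ∃ i, v ∈ f i) ∧
  (∀ u v, G.Adj u v → ∃ i, u ∈ f i ∧ v ∈ f i) ∧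
  (∀ v, (T.induce {i | v ∈ f i}).Connected)

/-- The treewidth of a finite graph: the minimum over all tree decompositions of
(maximum bag size minus one), phrased as the least `w` such that `G` has a tree
decomposition all of whose bags have at most `w + 1` vertices. -/
def treewidth {V : Type} [Fintype V] (G : SimpleGraph V) : ℕ :=
  sInf {w | ∃ (ι : Type) (_ : Fintype ι) (T : SimpleGraph ι) (f : ι → Finset V),
    IsTreeDecomp G T f ∧ ∀ i, (f i).card ≤ w + 1}

/-- `S` is an `a`-`b` separator of `G`: `a, b ∉ S` and every walk from `a` to `b`
meets `S` (i.e. `a` and `b` lie in different connected components of `G ∖ S`). -/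
def IsABSep {V : Type} (G : SimpleGraph V) (a b : V) (S : Finset V) : Prop :=
  a ∉ S ∧ b ∉ S ∧ ∀ w : G.Walk a b, ∃ x ∈ w.support, x ∈ S

/-- `S` is a minimal separator of `G`: for some vertices `a, b`, it is an
`a`-`b` separator no proper subset of which is an `a`-`b` separator. -/
def IsMinSep {V : Type} (G : SimpleGraph V) (S : Finset V) : Prop :=
  ∃ a b, IsABSep G a b S ∧ ∀ S' ⊂ S, ¬ IsABSep G a b S'

/-- The grid graph `P_m × P_n`, with vertex set
`{(i,j) : 1 ≤ i ≤ n, 1 ≤ j ≤ m}` and edges between vertices at ℓ1-distance 1. -/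
def gridGraph (n m : ℕ) : SimpleGraph (Fin n × Fin m) where
  Adj a b := Nat.dist a.1.val b.1.val + Nat.dist a.2.val b.2.val = 1
  symm := by
    constructor
    intro a b h
    beta_reduce at h ⊢
    rwa [Nat.dist_comm b.1.val, Nat.dist_comm b.2.val]
  loopless := by constructor; intro a h; simp [Nat.dist_self] at h


/-- Vertices of the broom: grid vertices plus, for each row `i`, a path on `2^k - 1` vertices. -/
abbrev BroomV (n m k : ℕ) : Type := (Fin n × Fin m) ⊕ (Fin n × Fin (2 ^ k - 1))

/-- The broom `B_{n,m,k}`. -/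
def broom (n m k : ℕ) : SimpleGraph (BroomV n m k) :=
  SimpleGraph.fromRel (fun x y =>
    match x, y with
    | .inl a, .inl b => (gridGraph n m).Adj a b
    | .inl a, .inr b => a.1 = b.1 ∧ a.2.val = m - 1 ∧ b.2.val = 0
    | .inr a, .inr b => a.1 = b.1 ∧ a.2.val + 1 = b.2.val
    | .inr _, .inl _ => False)

/-- Vertices of the double broom: grid vertices plus, for each row `i`, a path
attached at `(i,1)` (first summand) and a path attached at `(i,m)` (second summand). -/
abbrev DBroomV (n m k : ℕ) : Type :=
  (Fin n × Fin m) ⊕ (Fin n × Fin (2 ^ k - 1)) ⊕ (Fin n × Fin (2 ^ k - 1))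

/-- The double broom `D_{n,m,k}`. -/
def dbroom (n m k : ℕ) : SimpleGraph (DBroomV n m k) :=
  SimpleGraph.fromRel (fun x y =>
    match x, y with
    | .inl a, .inl b => (gridGraph n m).Adj a b
    | .inl a, .inr (.inl b) => a.1 = b.1 ∧ a.2.val = 0 ∧ b.2.val = 0
    | .inl a, .inr (.inr b) => a.1 = b.1 ∧ a.2.val = m - 1 ∧ b.2.val = 0
    | .inr (.inl a), .inr (.inl b) => a.1 = b.1 ∧ a.2.val + 1 = b.2.val
    | .inr (.inr a), .inr (.inr b) => a.1 = b.1 ∧ a.2.val + 1 = b.2.val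
    | _, _ => False)

/-- Vertices of the graph `G_{n,m,k,l}`: grid vertices, plus a path on `2^k - 1`
vertices for every triple (row `i`, end `e ∈ {1,m}`, vertex `w ∈ W`), plus the
set `W` of `l` new vertices. -/
abbrev CornerV (n m k l : ℕ) : Type :=
  (Fin n × Fin m) ⊕ ((Fin n × Fin 2 × Fin l) × Fin (2 ^ k - 1)) ⊕ Fin l

/-- The graph `G_{n,m,k,l}`. -/
def corner (n m k l : ℕ) : SimpleGraph (CornerV n m k l) :=
  SimpleGraph.fromRel (fun x y =>
    match x, y with
    | .inl a, .inl b => (gridGraph n m).Adj a b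
    | .inl a, .inr (.inl (⟨i, e, _⟩, t)) =>
        a.1 = i ∧ t.val = 0 ∧
          ((e.val = 0 ∧ a.2.val = 0) ∨ (e.val = 1 ∧ a.2.val = m - 1))
    | .inr (.inl (p, t)), .inr (.inl (q, s)) => p = q ∧ t.val + 1 = s.val
    | .inr (.inl (⟨_, _, w⟩, t)), .inr (.inr w') => w = w' ∧ t.val = 2 ^ k - 2
    | _, _ => False)

/-- `H` is a minor of `G`: there are pairwise disjoint connected branch sets in
`G`, one for each vertex of `H`, such that adjacent vertices of `H` have
adjacent branch sets. -/
def IsMinor {W V : Type} (H : SimpleGraph W) (G : SimpleGraph V) : Prop :=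
  ∃ B : W → Set V,
    (∀ w, (G.induce (B w)).Connected) ∧
    (∀ w w', w ≠ w' → Disjoint (B w) (B w')) ∧
    (∀ w w', H.Adj w w' → ∃ u ∈ B w, ∃ v ∈ B w', G.Adj u v)

/-- A graph is chordal if it has no induced cycle of length four or more. -/
def IsChordal {V : Type} (G : SimpleGraph V) : Prop :=
  ∀ c : ℕ, 4 ≤ c → IsEmpty (SimpleGraph.cycleGraph c ↪g G)

/-- A graph is a cograph if it has no induced path on four vertices. -/
def IsCograph {V : Type} (G : SimpleGraph V) : Prop :=
  IsEmpty (SimpleGraph.pathGraph 4 ↪g G)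

/-- A graph is outerplanar iff it contains neither `K₄` nor `K_{2,3}` as a minor. -/
def IsOuterplanar {V : Type} (G : SimpleGraph V) : Prop :=
  ¬ IsMinor (⊤ : SimpleGraph (Fin 4)) G ∧
  ¬ IsMinor (completeBipartiteGraph (Fin 2) (Fin 3)) G

/-- The graph obtained from `G'` and the path on `p` vertices by adding a single
edge between `u ∈ V(G')` and a path vertex `v`. -/
def attachPath {V' : Type} (G' : SimpleGraph V') (p : ℕ) (u : V') (v : Fin p) :
    SimpleGraph (V' ⊕ Fin p) :=
  SimpleGraph.fromRel (fun x y =>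
    match x, y with
    | .inl a, .inl b => G'.Adj a b
    | .inr a, .inr b => a.val + 1 = b.val
    | .inl a, .inr b => a = u ∧ b = v
    | .inr _, .inl _ => False)

namespace RootedForest

variable {V : Type} {T : RootedForest V} {u v w : V}

theorem one_le_depth (T : RootedForest V) (v : V) : 1 ≤ T.depth v := by
  cases h : T.parent v with
  | none => rw [T.depth_root v h]
  | some u => rw [T.depth_parent v u h]; omega

theorem Ancestor.depth_le (h : T.Ancestor u v) : T.depth u ≤ T.depth v := by
  induction h with
  | refl => exact le_rfl
  | tail _ hparent _ => have := T.depth_parent _ _ hparent; omega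

theorem Ancestor.eq_of_depth_le (h : T.Ancestor u v) (hle : T.depth v ≤ T.depth u) : u = v := by
  induction h with
  | refl => rfl
  | tail hv hparent _ =>
    have := Ancestor.depth_le (T := T) hv
    have := T.depth_parent _ _ hparent
    omega

theorem Ancestor.comparable (hu : T.Ancestor u w) (hv : T.Ancestor v w) :
    T.Ancestor u v ∨ T.Ancestor v u :=
  (Relation.ReflTransGen.total_of_right_unique
    (fun _ _ _ hb hc => Option.some_injective _ (hb.symm.trans hc)) hu hv).symm

theorem Ancestor.eq_of_depth_eq (hu : T.Ancestor u w) (hv : T.Ancestor v w)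
    (h : T.depth u = T.depth v) : u = v := by
  rcases hu.comparable hv with huv | hvu
  · exact huv.eq_of_depth_le h.ge
  · exact (hvu.eq_of_depth_le h.le).symm

theorem card_le_of_ancestor {ι : Type*} [Fintype ι] {z : ι → V} (hz : Function.Injective z)
    {c : V} (hanc : ∀ i, T.Ancestor (z i) c) {d : ℕ} (hdepth : ∀ i, T.depth (z i) ≤ d) :
    Fintype.card ι ≤ d := by
  calc Fintype.card ι = (Finset.univ : Finset ι).card := Finset.card_univ.symm
    _ ≤ (Finset.Icc 1 d).card :=
        Finset.card_le_card_of_injOn (fun i => T.depth (z i))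
          (fun i _ => Finset.mem_Icc.2 ⟨T.one_le_depth _, hdepth i⟩)
          (fun i _ i' _ h => hz ((hanc i).eq_of_depth_eq (hanc i') h))
    _ = d := by simp

end RootedForest

namespace IsTDDecomp

variable {V : Type} {G : SimpleGraph V} {T : RootedForest V}

theorem ancestor_of_walk (hT : IsTDDecomp G T) {z a b : V} (p : G.Walk a b)
    (hmin : ∀ x ∈ p.support, T.depth z ≤ T.depth x) (ha : T.Ancestor z a) :
    T.Ancestor z b := by
  induction p with
  | nil => exact ha
  | @cons a c b hadj p ih =>
    refine ih (fun x hx => hmin x (List.mem_cons_of_mem _ hx)) ?_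
    rcases hT _ _ hadj with hac | hca
    · exact hac.trans ha
    · rcases ha.comparable hca with hzc | hcz
      · exact hzc
      · have hc : T.depth z ≤ T.depth c := hmin c (List.mem_cons_of_mem _ p.start_mem_support)
        exact hcz.eq_of_depth_le hc ▸ .refl

theorem exists_ancestor_of_preconnected (hT : IsTDDecomp G T) {S : Set V}
    (hS : (G.induce S).Preconnected) (hne : S.Nonempty) :
    ∃ z ∈ S, (∀ x ∈ S, T.depth z ≤ T.depth x) ∧ ∀ x ∈ S, T.Ancestor z x := by
  set z := Function.argminOn T.depth S hne
  have hzS : z ∈ S := Function.argminOn_mem T.depth S hne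
  have hmin : ∀ x ∈ S, T.depth z ≤ T.depth x := fun x hx => Function.argminOn_le T.depth S hx
  refine ⟨z, hzS, hmin, fun x hx => ?_⟩
  obtain ⟨p⟩ := hS ⟨z, hzS⟩ ⟨x, hx⟩
  have hsupp : ∀ y ∈ (p.map (Embedding.induce S).toHom).support, y ∈ S := by
    intro y hy
    rw [Walk.support_map, List.mem_map] at hy
    obtain ⟨y, -, rfl⟩ := hy
    exact y.2
  exact hT.ancestor_of_walk _ (fun y hy => hmin y (hsupp y hy)) .refl

theorem card_le_of_preconnected {ι : Type*} [Fintype ι] (hT : IsTDDecomp G T)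
    {S : ι → Set V} {C : Set V} {d : ℕ}
    (hS : ∀ i, (G.induce (S i)).Preconnected)
    (hSdisj : Pairwise fun i i' => Disjoint (S i) (S i'))
    (hStop : ∀ i, (S i ∩ T.top d).Nonempty)
    (hC : (G.induce C).Preconnected) (hCtop : Disjoint C (T.top d))
    (hSC : ∀ i, (S i ∩ C).Nonempty) :
    Fintype.card ι ≤ d := by
  cases isEmpty_or_nonempty ι
  · simp
  obtain ⟨c, hcC, -, hc⟩ := hT.exists_ancestor_of_preconnected hC
    ((hSC (Classical.arbitrary ι)).mono Set.inter_subset_right)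
  have hcd : d < T.depth c := not_le.1 (Set.disjoint_left.1 hCtop hcC)
  have hz : ∀ i, ∃ z ∈ S i, T.depth z ≤ d ∧ T.Ancestor z c := by
    intro i
    obtain ⟨x, hxS, hxC⟩ := hSC i
    obtain ⟨a, haS, ha⟩ := hStop i
    obtain ⟨z, hzS, hmin, hanc⟩ := hT.exists_ancestor_of_preconnected (hS i) ⟨x, hxS⟩
    have hzd : T.depth z ≤ d := (hmin a haS).trans ha
    refine ⟨z, hzS, hzd, ?_⟩
    rcases (hanc x hxS).comparable (hc x hxC) with hzc | hcz
    · exact hzc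
    · exact absurd (hcz.depth_le.trans hzd) (not_le.2 hcd)
  choose z hzS hzd hzc using hz
  refine T.card_le_of_ancestor (fun i i' h => ?_) hzc hzd
  by_contra hne
  exact Set.disjoint_left.1 (hSdisj hne) (hzS i) (h ▸ hzS i')

end IsTDDecomp

namespace SimpleGraph

variable {V W : Type*} {G : SimpleGraph V}

theorem Preconnected.induce_range {H : SimpleGraph W} (hH : H.Preconnected) (f : H →g G) :
    (G.induce (Set.range f)).Preconnected :=
  hH.map ⟨fun x => ⟨f x, x, rfl⟩, f.map_adj⟩ (by rintro ⟨_, x, rfl⟩; exact ⟨x, rfl⟩)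

theorem preconnected_induce_range_of_adj_succ {N : ℕ} (f : Fin N → V)
    (hf : ∀ a b : Fin N, a.val + 1 = b.val → G.Adj (f a) (f b)) :
    (G.induce (Set.range f)).Preconnected :=
  (pathGraph_preconnected N).induce_range
    ⟨f, fun {a b} h => (pathGraph_adj.1 h).elim (hf a b) fun h => (hf b a h).symm⟩

end SimpleGraph

section Broom

variable {n m k : ℕ}

theorem broom_adj_inl_inl {a b : Fin n × Fin m} :
    (broom n m k).Adj (.inl a) (.inl b) ↔ (gridGraph n m).Adj a b := by
  rw [broom, fromRel_adj]
  exact ⟨fun h => h.2.elim id (·.symm), fun h => ⟨by simpa using h.ne, .inl h⟩⟩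

theorem gridGraph_adj_of_fst_succ {a b : Fin n} (h : a.val + 1 = b.val) (j : Fin m) :
    (gridGraph n m).Adj (a, j) (b, j) := by
  change Nat.dist a b + Nat.dist j j = 1
  simp only [Nat.dist]
  omega

theorem gridGraph_adj_of_snd_succ (i : Fin n) {a b : Fin m} (h : a.val + 1 = b.val) :
    (gridGraph n m).Adj (i, a) (i, b) := by
  change Nat.dist i i + Nat.dist a b = 1
  simp only [Nat.dist]
  omega

/-- The set `Vᵢ` traversed as a path: row `i` of the grid, then the handle attached to `(i,m)`. -/
def broomRow (i : Fin n) : Fin (m + (2 ^ k - 1)) → BroomV n m k :=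
  Fin.addCases (fun j => .inl (i, j)) (fun t => .inr (i, t))

@[simp]
theorem broomRow_castAdd (i : Fin n) (j : Fin m) :
    broomRow (k := k) i (Fin.castAdd _ j) = .inl (i, j) :=
  Fin.addCases_left _

@[simp]
theorem broomRow_natAdd (i : Fin n) (t : Fin (2 ^ k - 1)) :
    broomRow i (Fin.natAdd m t) = .inr (i, t) :=
  Fin.addCases_right _

theorem broomRow_adj_succ (i : Fin n) {a b : Fin (m + (2 ^ k - 1))} (h : a.val + 1 = b.val) :
    (broom n m k).Adj (broomRow i a) (broomRow i b) := by
  induction a using Fin.addCases with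
  | left a =>
    induction b using Fin.addCases with
    | left b =>
      simp only [Fin.val_castAdd] at h
      simpa [broom_adj_inl_inl] using gridGraph_adj_of_snd_succ i h
    | right t =>
      simp only [Fin.val_castAdd, Fin.val_natAdd] at h
      rw [broomRow_castAdd, broomRow_natAdd, broom, fromRel_adj]
      exact ⟨by simp, .inl ⟨rfl, show a.val = m - 1 by omega, show t.val = 0 by omega⟩⟩
  | right s =>
    induction b using Fin.addCases with
    | left b => simp only [Fin.val_castAdd, Fin.val_natAdd] at h; omega
    | right t =>
      simp only [Fin.val_natAdd] at h
      rw [broomRow_natAdd, broomRow_natAdd, broom, fromRel_adj]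
      exact ⟨by simp [Fin.ext_iff]; omega, .inl ⟨rfl, show s.val + 1 = t.val by omega⟩⟩

theorem broomRow_ne_of_ne {i i' : Fin n} (h : i ≠ i') (a b : Fin (m + (2 ^ k - 1))) :
    broomRow i a ≠ broomRow i' b := by
  induction a using Fin.addCases <;> induction b using Fin.addCases <;> simp [h]

end Broom

theorem statement8_general (n m k : ℕ)
    {V' : Type}
    (G : SimpleGraph (V' ⊕ BroomV n m k))
    -- `G` restricted to the broom vertices is the broom:
    (hG2 : ∀ u v : BroomV n m k, G.Adj (.inr u) (.inr v) ↔ (broom n m k).Adj u v)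
    (T : RootedForest (V' ⊕ BroomV n m k)) (hT : IsTDDecomp G T)
    (d : ℕ)
    (h1 : ∃ j : Fin m, ∀ i : Fin n, (Sum.inr (Sum.inl (i, j)) : V' ⊕ BroomV n m k) ∉ T.top d)
    (h2 : ∀ i : Fin n,
        (∃ j : Fin m, (Sum.inr (Sum.inl (i, j)) : V' ⊕ BroomV n m k) ∈ T.top d) ∨
        (∃ t : Fin (2 ^ k - 1), (Sum.inr (Sum.inr (i, t)) : V' ⊕ BroomV n m k) ∈ T.top d)) :
    n ≤ d := by
  obtain ⟨j, hj⟩ := h1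
  let φ : broom n m k →g G := ⟨Sum.inr, (hG2 _ _).2⟩
  let row : Fin n → Set (V' ⊕ BroomV n m k) := fun i => Set.range (φ ∘ broomRow i)
  let column : Set (V' ⊕ BroomV n m k) := Set.range fun i => .inr (.inl (i, j))
  have hrow (i : Fin n) : (G.induce (row i)).Preconnected :=
    preconnected_induce_range_of_adj_succ _ fun a b h => φ.map_adj (broomRow_adj_succ i h)
  have hrow_disjoint : Pairwise fun i i' => Disjoint (row i) (row i') := by
    refine fun i i' h => Set.disjoint_left.2 ?_
    rintro _ ⟨a, rfl⟩ ⟨b, hb⟩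
    exact broomRow_ne_of_ne h a b (Sum.inr_injective hb).symm
  have hrow_top (i : Fin n) : (row i ∩ T.top d).Nonempty := by
    rcases h2 i with ⟨j', hj'⟩ | ⟨t, ht⟩
    · exact ⟨_, ⟨Fin.castAdd _ j', by simp [φ]⟩, hj'⟩
    · exact ⟨_, ⟨Fin.natAdd m t, by simp [φ]⟩, ht⟩
  have hcolumn : (G.induce column).Preconnected :=
    preconnected_induce_range_of_adj_succ _ fun a b h =>
      φ.map_adj (broom_adj_inl_inl.2 (gridGraph_adj_of_fst_succ h j))
  have hcolumn_top : Disjoint column (T.top d) := by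
    refine Set.disjoint_left.2 ?_
    rintro _ ⟨i, rfl⟩
    exact hj i
  have hrow_column (i : Fin n) : (row i ∩ column).Nonempty :=
    ⟨_, ⟨Fin.castAdd _ j, by simp [φ]⟩, i, rfl⟩
  simpa using
    hT.card_le_of_preconnected hrow hrow_disjoint hrow_top hcolumn hcolumn_top hrow_column

/-- Let `G` be obtained from the disjoint union of a graph `G'` and
the broom `B_{n,m,k}` (where `k ≥ 2n + td(G') + td(P_m × P_n)`) by adding some
edges between `V(G')` and the first grid column `{(i,1) : 1 ≤ i ≤ n}`.  If `T`
is an optimal treedepth decomposition of `G` and `d ≥ 1` is such that (1) some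
grid column is disjoint from `top(T,d)`, and (2) for every row `i` the set `V_i`
(row `i` of the grid together with the path attached to `(i,m)`) meets
`top(T,d)`, then `d ≥ n`. -/
theorem statement8 (n m k : ℕ) (hn : 0 < n) (hm : 0 < m) (hk0 : 0 < k)
    {V' : Type} [Fintype V'] (G' : SimpleGraph V')
    (hk : 2 * n + treedepth G' + treedepth (gridGraph n m) ≤ k)
    (G : SimpleGraph (V' ⊕ BroomV n m k))
    -- `G` restricted to `V'` is `G'`:
    (hG1 : ∀ u v : V', G.Adj (.inl u) (.inl v) ↔ G'.Adj u v)
    -- `G` restricted to the broom vertices is the broom: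
    (hG2 : ∀ u v : BroomV n m k, G.Adj (.inr u) (.inr v) ↔ (broom n m k).Adj u v)
    -- the added edges go between `V'` and `{(i,1) : 1 ≤ i ≤ n}`:
    (hG3 : ∀ (u : V') (b : BroomV n m k), G.Adj (.inl u) (.inr b) →
        ∃ i : Fin n, b = .inl (i, ⟨0, hm⟩))
    (T : RootedForest (V' ⊕ BroomV n m k)) (hT : IsTDDecomp G T)
    (hopt : T.height = treedepth G)
    (d : ℕ) (hd : 1 ≤ d)
    (h1 : ∃ j : Fin m, ∀ i : Fin n, (Sum.inr (Sum.inl (i, j)) : V' ⊕ BroomV n m k) ∉ T.top d)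
    (h2 : ∀ i : Fin n,
        (∃ j : Fin m, (Sum.inr (Sum.inl (i, j)) : V' ⊕ BroomV n m k) ∈ T.top d) ∨
        (∃ t : Fin (2 ^ k - 1), (Sum.inr (Sum.inr (i, t)) : V' ⊕ BroomV n m k) ∈ T.top d)) :
    n ≤ d :=
  statement8_general n m k G hG2 T hT d h1 h2

end
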